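/- arXiv:1511.08415 — 7 statements merged into one kernel-verified Lean document; each statement's English description precedes it below -/
import Mathlib

section
/- If β ∈ (1, (1+√5)/2), then the number 1 has at least two distinct expansions of the form 1 = Σ_{k≥1} u_k β^{-k} with digits u_k ∈ {0,1}. -/
/-!
Since `1 = 1/β + (β - 1)/β = 0/β + β/β`, an expansion of `1` may start with the digit `1`
followed by an expansion of `β - 1`, or with the digit `0` followed by an expansion of `β`.
For `1 < β ≤ 2` the greedy map `x ↦ β x - d(x)` keeps `[0, 1/(β - 1)]` invariant, so the greedy
digits expand every point of that interval. Now `β - 1` lies in it since `β ≤ 2`, and `β` lies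
in it exactly when `β² ≤ β + 1`, i.e. `β ≤ φ`.
-/

open Set Filter Topology Finset

namespace BetaExpansion

variable {β x : ℝ}

noncomputable def greedyDigit (β x : ℝ) : ℝ := if 1 ≤ β * x then 1 else 0

noncomputable def greedyMap (β x : ℝ) : ℝ := β * x - greedyDigit β x

theorem greedyDigit_eq_zero_or_one : greedyDigit β x = 0 ∨ greedyDigit β x = 1 := by
  unfold greedyDigit; split_ifs <;> simp

theorem mapsTo_greedyMap (hβ1 : 1 < β) (hβ2 : β ≤ 2) :
    MapsTo (greedyMap β) (Icc 0 (1 / (β - 1))) (Icc 0 (1 / (β - 1))) := by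
  intro y ⟨hy0, hy1⟩
  have hβ1' : 0 < β - 1 := sub_pos.2 hβ1
  rw [le_div_iff₀ hβ1'] at hy1
  unfold greedyMap greedyDigit
  constructor <;> split_ifs with h
  · linarith
  · simp only [sub_zero]; positivity
  · rw [le_div_iff₀ hβ1']; nlinarith
  · rw [le_div_iff₀ hβ1']; nlinarith

theorem greedyDigit_div_pow (hβ : β ≠ 0) (k : ℕ) :
    greedyDigit β ((greedyMap β)^[k] x) / β ^ (k + 1) =
      (greedyMap β)^[k] x / β ^ k - (greedyMap β)^[k + 1] x / β ^ (k + 1) := by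
  rw [Function.iterate_succ_apply', greedyMap]
  field_simp
  ring

theorem hasSum_greedyDigit (hβ1 : 1 < β) (hβ2 : β ≤ 2) (hx : x ∈ Icc 0 (1 / (β - 1))) :
    HasSum (fun k ↦ greedyDigit β ((greedyMap β)^[k] x) / β ^ (k + 1)) x := by
  have hβ0 : 0 < β := by linarith
  have horbit k : (greedyMap β)^[k] x ∈ Icc 0 (1 / (β - 1)) :=
    (mapsTo_greedyMap hβ1 hβ2).iterate k hx
  have hnonneg k : 0 ≤ greedyDigit β ((greedyMap β)^[k] x) / β ^ (k + 1) := by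
    rcases greedyDigit_eq_zero_or_one (β := β) (x := (greedyMap β)^[k] x) with h | h <;>
      rw [h] <;> positivity
  have hremainder : Tendsto (fun n ↦ (greedyMap β)^[n] x / β ^ n) atTop (𝓝 0) := by
    have hgeom : Tendsto (fun n ↦ 1 / (β - 1) * β⁻¹ ^ n) atTop (𝓝 0) := by
      simpa using (tendsto_pow_atTop_nhds_zero_of_lt_one (by positivity)
        (inv_lt_one_of_one_lt₀ hβ1)).const_mul (1 / (β - 1))
    refine squeeze_zero (fun n ↦ div_nonneg (horbit n).1 (by positivity)) (fun n ↦ ?_) hgeom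
    rw [inv_pow, ← div_eq_mul_inv]
    gcongr
    exact (horbit n).2
  rw [hasSum_iff_tendsto_nat_of_nonneg hnonneg]
  simp_rw [greedyDigit_div_pow hβ0.ne', sum_range_sub']
  simpa using hremainder.const_sub x

theorem hasSum_cons {d y : ℝ} {u : ℕ → ℝ} (hu : HasSum (fun k ↦ u k / β ^ (k + 1)) y) :
    HasSum (fun k ↦ Stream'.cons d u k / β ^ (k + 1)) (d / β + y / β) := by
  rw [← hasSum_nat_add_iff' 1, sum_range_one]
  simpa [Stream'.cons, pow_succ, div_div] using hu.div_const β

theorem exists_expansion_of_mem_Icc (hβ1 : 1 < β) (hβ2 : β ≤ 2) (hx : x ∈ Icc 0 (1 / (β - 1))) :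
    ∃ u : ℕ → ℝ, (∀ k, u k = 0 ∨ u k = 1) ∧ HasSum (fun k ↦ u k / β ^ (k + 1)) x :=
  ⟨_, fun _ ↦ greedyDigit_eq_zero_or_one, hasSum_greedyDigit hβ1 hβ2 hx⟩

theorem exists_expansion_head_eq {d : ℝ} (hβ1 : 1 < β) (hβ2 : β ≤ 2) (hd : d = 0 ∨ d = 1)
    (hx : β * x - d ∈ Icc 0 (1 / (β - 1))) :
    ∃ u : ℕ → ℝ, u 0 = d ∧ (∀ k, u k = 0 ∨ u k = 1) ∧ HasSum (fun k ↦ u k / β ^ (k + 1)) x := by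
  obtain ⟨u, hu01, hu⟩ := exists_expansion_of_mem_Icc hβ1 hβ2 hx
  refine ⟨Stream'.cons d u, rfl, fun k ↦ ?_, ?_⟩
  · cases k
    exacts [hd, hu01 _]
  · convert hasSum_cons (d := d) hu using 1
    field_simp
    ring

theorem le_one_div_sub_one_of_le_goldenRatio (hβ1 : 1 < β) (hβ : β ≤ Real.goldenRatio) :
    β ≤ 1 / (β - 1) := by
  rw [le_div_iff₀ (sub_pos.2 hβ1)]
  nlinarith [Real.goldenRatio_sq]

end BetaExpansion

open BetaExpansion in
/-- If β ∈ (1, (1+√5)/2), then 1 has at least two distinct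
expansions 1 = Σ_{k≥1} u_k β^{-k} with digits u_k ∈ {0,1}. -/
theorem stmt_0 (β : ℝ) (hβ1 : 1 < β) (hβ2 : β < (1 + Real.sqrt 5) / 2) :
    ∃ u v : ℕ → ℝ, (∀ k, u k = 0 ∨ u k = 1) ∧ (∀ k, v k = 0 ∨ v k = 1) ∧ u ≠ v ∧
      (1 : ℝ) = ∑' k : ℕ, u k / β ^ (k + 1) ∧ (1 : ℝ) = ∑' k : ℕ, v k / β ^ (k + 1) := by
  have hβ2' : β ≤ 2 := (hβ2.trans Real.goldenRatio_lt_two).le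
  have hβ1' : 0 < β - 1 := sub_pos.2 hβ1
  obtain ⟨u, hu0, hu01, hu⟩ := exists_expansion_head_eq (x := 1) (d := 1) hβ1 hβ2' (Or.inr rfl)
    ⟨by linarith, by rw [le_div_iff₀ hβ1']; nlinarith⟩
  obtain ⟨v, hv0, hv01, hv⟩ := exists_expansion_head_eq (x := 1) (d := 0) hβ1 hβ2' (Or.inl rfl)
    ⟨by linarith, by simpa using le_one_div_sub_one_of_le_goldenRatio hβ1 hβ2.le⟩
  refine ⟨u, v, hu01, hv01, fun huv ↦ ?_, hu.tsum_eq.symm, hv.tsum_eq.symm⟩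
  simp [huv, hv0] at hu0
end

section
/- Let A = {a_0, a_1, …, a_d} with a_0 < a_1 < … < a_d, and suppose β > 1 + (a_d − a_0)/(a_{j+1} − a_j) for some 0 ≤ j < d. Then the periodic-tail sequence u = a_j, a_d, a_d, a_d, … is a unique expansion, i.e., x = a_j/β + Σ_{k≥2} a_d β^{-k} has no other expansion (v_k) ∈ A^ℕ with x = Σ_{k≥1} v_k β^{-k}. -/
/-!
If `x = a_j/β + a_d/(β(β-1))` had another expansion `v`, its first digit could not be smaller
than `a_j`, since the tail can contribute at most `a_d/(β(β-1))`, and it could not be `a_{j+1}` or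
larger, since the tail contributes at least `a_0/(β(β-1))` and the hypothesis on `β` says exactly
that the gap `(a_{j+1} - a_j)/β` exceeds the range `(a_d - a_0)/(β(β-1))` of all tails. So the
first digit is `a_j`, the tails of both expansions have the same value, and since every digit of
`v` is at most `a_d`, all of them equal `a_d`.
-/

open Set

theorem Summable.eq_of_le_of_tsum_eq {ι α : Type*} [AddCommGroup α] [PartialOrder α]
    [IsOrderedAddMonoid α] [TopologicalSpace α] [IsTopologicalAddGroup α] [OrderClosedTopology α]
    {f g : ι → α} (hf : Summable f) (hg : Summable g) (hle : f ≤ g)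
    (h : ∑' i, f i = ∑' i, g i) : f = g := by
  by_contra hne
  obtain ⟨i, hi⟩ := Function.ne_iff.mp hne
  exact (hf.tsum_lt_tsum hle ((hle i).lt_of_ne hi) hg).ne h

section Expansion

variable {β : ℝ}

theorem summable_div_pow_add (hβ : 1 < β) {u : ℕ → ℝ} {m M : ℝ} (hu : ∀ k, u k ∈ Icc m M)
    (n : ℕ) : Summable fun k => u k / β ^ (k + n) := by
  have hβ0 : 0 < β := by linarith
  have hgeo : Summable fun k : ℕ => max |m| |M| / β ^ n * β⁻¹ ^ k :=
    (summable_geometric_of_lt_one (by positivity) (inv_lt_one_of_one_lt₀ hβ)).mul_left _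
  refine .of_norm_bounded hgeo fun k => ?_
  calc ‖u k / β ^ (k + n)‖ = |u k| / β ^ (k + n) := by
        rw [Real.norm_eq_abs, abs_div, abs_of_pos (pow_pos hβ0 _)]
    _ ≤ max |m| |M| / β ^ (k + n) := by gcongr; exact abs_le_max_abs_abs (hu k).1 (hu k).2
    _ = max |m| |M| / β ^ n * β⁻¹ ^ k := by rw [inv_pow, pow_add]; ring

theorem tsum_const_div_pow_add_two (hβ : 1 < β) (c : ℝ) :
    ∑' k : ℕ, c / β ^ (k + 2) = c / (β * (β - 1)) := by
  have hβ0 : 0 < β := by linarith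
  have hβ1 : β - 1 ≠ 0 := by linarith
  have h : (fun k : ℕ => c / β ^ (k + 2)) = fun k => c / β ^ 2 * β⁻¹ ^ k := by
    ext k; rw [inv_pow]; ring
  rw [h, tsum_mul_left, tsum_geometric_of_lt_one (by positivity) (inv_lt_one_of_one_lt₀ hβ)]
  field_simp

theorem tsum_div_pow_succ_mem_Icc (hβ : 1 < β) {u : ℕ → ℝ} {m M : ℝ} (hu : ∀ k, u k ∈ Icc m M) :
    ∑' k, u k / β ^ (k + 1) ∈ Icc (u 0 / β + m / (β * (β - 1))) (u 0 / β + M / (β * (β - 1))) := by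
  have hβ0 : 0 < β := by linarith
  have htail := summable_div_pow_add hβ (fun k => hu (k + 1)) 2
  have hconst (c : ℝ) :=
    summable_div_pow_add hβ (u := fun _ => c) (fun _ => left_mem_Icc.2 le_rfl) 2
  rw [(summable_div_pow_add hβ hu 1).tsum_eq_zero_add, zero_add, pow_one,
    ← tsum_const_div_pow_add_two hβ, ← tsum_const_div_pow_add_two hβ]
  exact ⟨add_le_add_right ((hconst m).tsum_le_tsum (fun k => by gcongr; exact (hu _).1) htail) _,
    add_le_add_right (htail.tsum_le_tsum (fun k => by gcongr; exact (hu _).2) (hconst M)) _⟩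

theorem div_add_div_lt_div_add_div_of_gap {p q m M : ℝ} (hβ : 1 < β) (hpq : p < q)
    (hgap : 1 + (M - m) / (q - p) < β) :
    p / β + M / (β * (β - 1)) < q / β + m / (β * (β - 1)) := by
  have hβ0 : 0 < β - 1 := by linarith
  have hrange : M - m < (β - 1) * (q - p) := (div_lt_iff₀ (sub_pos.2 hpq)).1 (by linarith)
  have hdiff : q / β + m / (β * (β - 1)) - (p / β + M / (β * (β - 1)))
      = ((β - 1) * (q - p) - (M - m)) / (β * (β - 1)) := by
    field_simp
    ring
  rw [← sub_pos, hdiff]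
  exact div_pos (by linarith) (by positivity)

theorem first_digit_mem_Ico (hβ : 1 < β) {u : ℕ → ℝ} {p q m M : ℝ} (hu : ∀ k, u k ∈ Icc m M)
    (hpq : p < q) (hgap : 1 + (M - m) / (q - p) < β)
    (hsum : ∑' k, u k / β ^ (k + 1) = p / β + M / (β * (β - 1))) :
    u 0 ∈ Ico p q := by
  have hβ0 : 0 < β := by linarith
  obtain ⟨hlow, hup⟩ := tsum_div_pow_succ_mem_Icc hβ hu
  rw [hsum] at hlow hup
  constructor
  · by_contra! h
    have : u 0 / β < p / β := by gcongr
    linarith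
  · by_contra! h
    have : q / β ≤ u 0 / β := by gcongr
    linarith [div_add_div_lt_div_add_div_of_gap hβ hpq hgap]

end Expansion

theorem stmt_1_general (d : ℕ) (a : ℕ → ℝ) (ha : ∀ i < d, a i < a (i + 1))
    (β : ℝ) (j : ℕ) (hj : j < d) (hβ : β > 1 + (a d - a 0) / (a (j + 1) - a j)) :
    ∀ v : ℕ → ℕ, (∀ k, v k ≤ d) →
      (∑' k : ℕ, a (v k) / β ^ (k + 1)) = a j / β + ∑' k : ℕ, a d / β ^ (k + 2) →
      ∀ k, a (v k) = if k = 0 then a j else a d := by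
  intro v hv hsum
  have hmono : StrictMonoOn a (Iic d) := strictMonoOn_Iic_of_lt_succ ha
  have hdigits : ∀ k, a (v k) ∈ Icc (a 0) (a d) := fun k =>
    ⟨hmono.monotoneOn (Nat.zero_le d) (hv k) (Nat.zero_le _),
      hmono.monotoneOn (hv k) self_mem_Iic (hv k)⟩
  have hβ1 : 1 < β := by
    have : 0 ≤ (a d - a 0) / (a (j + 1) - a j) :=
      div_nonneg (sub_nonneg.2 ((hdigits 0).1.trans (hdigits 0).2)) (sub_pos.2 (ha j hj)).le
    linarith
  have hfirst : v 0 = j := by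
    obtain ⟨hlow, hup⟩ := first_digit_mem_Ico hβ1 hdigits (ha j hj) hβ
      (by rwa [← tsum_const_div_pow_add_two hβ1])
    have := (hmono.le_iff_le (mem_Iic.2 hj.le) (hv 0)).1 hlow
    have := (hmono.lt_iff_lt (hv 0) (mem_Iic.2 hj)).1 hup
    omega
  have htail : ∑' k, a (v (k + 1)) / β ^ (k + 2) = ∑' k : ℕ, a d / β ^ (k + 2) := by
    rw [(summable_div_pow_add hβ1 hdigits 1).tsum_eq_zero_add, hfirst] at hsum
    simpa using hsum
  have hterms := (summable_div_pow_add hβ1 (fun k => hdigits (k + 1)) 2).eq_of_le_of_tsum_eq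
    (summable_div_pow_add hβ1 (u := fun _ => a d) (fun _ => left_mem_Icc.2 le_rfl) 2)
    (fun k => div_le_div_of_nonneg_right (hdigits _).2 (by positivity)) htail
  rintro (_ | k)
  · simp [hfirst]
  · have hβk : β ^ (k + 2) ≠ 0 := by positivity
    simpa [hβk] using congr_fun hterms k

/-- if β > 1 + (a_d − a_0)/(a_{j+1} − a_j) for some j < d, then the
sequence a_j, a_d, a_d, … is the unique expansion of its value. -/
theorem stmt_1 (d : ℕ) (hd : 0 < d) (a : ℕ → ℝ) (ha : ∀ i < d, a i < a (i + 1))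
    (β : ℝ) (j : ℕ) (hj : j < d) (hβ : β > 1 + (a d - a 0) / (a (j + 1) - a j)) :
    ∀ v : ℕ → ℕ, (∀ k, v k ≤ d) →
      (∑' k : ℕ, a (v k) / β ^ (k + 1)) = a j / β + ∑' k : ℕ, a d / β ^ (k + 2) →
      ∀ k, a (v k) = if k = 0 then a j else a d :=
  stmt_1_general d a ha β j hj hβ
end

section
/- For any finite alphabet A = {a_0 < a_1 < … < a_d} and any β with 1 < β ≤ 1 + (a_d − a_0)/max_{0≤j<d}(a_{j+1} − a_j), every x in the interval [a_0/(β−1), a_d/(β−1)] has at least one β-expansion over A, i.e., there exists (u_k) ∈ A^ℕ with x = Σ_{k≥1} u_k β^{-k}. -/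
/-!
Greedy expansion. Put `L = a₀/(β-1)` and `R = a_d/(β-1)`, so that `βL = a₀ + L` and
`βR = a_d + R`. For `y ∈ [L, R]` the digits `a_j` with `βy - a_j ∈ [L, R]` are those in the
window `[βy - R, βy - L]`, of length `R - L = (a_d - a₀)/(β-1)`; the hypothesis on `β` says
exactly that no gap of the alphabet is longer than this, so the window always contains a digit.
Iterating `y ↦ βy - a_j` therefore keeps the orbit of `x` in `[L, R]`, and along a bounded
orbit `y_{k+1} = βy_k - c_k` the terms `c_k β^{-(k+1)} = y_k β^{-k} - y_{k+1} β^{-(k+1)}`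
telescope to `y_0`.
-/

open Set

theorem hasSum_div_pow_of_bounded_orbit {β : ℝ} (hβ : 1 < β) {y c : ℕ → ℝ} {B : ℝ}
    (hB : ∀ n, |y n| ≤ B) (hrec : ∀ n, y (n + 1) = β * y n - c n) :
    HasSum (fun k => c k / β ^ (k + 1)) (y 0) := by
  have hβ0 : 0 < β := zero_lt_one.trans hβ
  set g : ℕ → ℝ := fun n => y n / β ^ n
  have hg : Summable g := by
    refine .of_norm_bounded ((summable_geometric_of_lt_one (inv_nonneg.2 hβ0.le)
      (inv_lt_one_of_one_lt₀ hβ)).mul_left B) fun n => ?_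
    rw [Real.norm_eq_abs, abs_div, abs_of_pos (pow_pos hβ0 n), inv_pow, ← div_eq_mul_inv]
    gcongr
    exact hB n
  have hterm : ∀ k, c k / β ^ (k + 1) = g k - g (k + 1) := by
    intro k
    simp only [g, hrec, pow_succ]
    field_simp
    ring
  have htele := hg.hasSum.sub ((hasSum_nat_add_iff' 1).2 hg.hasSum)
  simp only [Finset.sum_range_one, sub_sub_cancel, ← hterm] at htele
  simpa [g] using htele

theorem exists_hasSum_of_forall_exists_mem {ι : Type*} {β : ℝ} (hβ : 1 < β) (a : ι → ℝ)
    {D : Set ι} {S : Set ℝ} (hS : Bornology.IsBounded S)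
    (hstep : ∀ y ∈ S, ∃ i ∈ D, β * y - a i ∈ S) {x : ℝ} (hx : x ∈ S) :
    ∃ u : ℕ → ι, (∀ k, u k ∈ D) ∧ HasSum (fun k => a (u k) / β ^ (k + 1)) x := by
  choose digit hdigit hmem using fun y : S => hstep y y.2
  let T : S → S := fun y => ⟨β * y - a (digit y), hmem y⟩
  obtain ⟨B, hB⟩ := hS.exists_norm_le
  refine ⟨fun n => digit (T^[n] ⟨x, hx⟩), fun n => hdigit _, ?_⟩
  refine hasSum_div_pow_of_bounded_orbit hβ (y := fun n => (T^[n] ⟨x, hx⟩ : ℝ))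
    (fun n => hB _ (T^[n] ⟨x, hx⟩).2) fun n => ?_
  rw [Function.iterate_succ_apply']

theorem exists_mem_Icc_of_forall_sub_le {a : ℕ → ℝ} {d : ℕ} {t w : ℝ}
    (hgap : ∀ j < d, a (j + 1) - a j ≤ w) (h0 : a 0 ≤ t + w) (hd : t ≤ a d) :
    ∃ j ≤ d, a j ∈ Icc t (t + w) := by
  classical
  set j := Nat.findGreatest (fun j => a j ≤ t + w) d
  have hjd : j ≤ d := Nat.findGreatest_le d
  refine ⟨j, hjd, ?_, Nat.findGreatest_spec (P := fun j => a j ≤ t + w) (Nat.zero_le d) h0⟩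
  rcases hjd.lt_or_eq with hlt | heq
  · have hnext := Nat.findGreatest_is_greatest (Nat.lt_succ_self j) hlt
    linarith [hgap j hlt, not_le.1 hnext]
  · rwa [heq]

theorem forall_exists_digit_mem_Icc {a : ℕ → ℝ} {d : ℕ} {β : ℝ} (hβ : 1 < β)
    (hgap : ∀ j < d, a (j + 1) - a j ≤ (a d - a 0) / (β - 1)) :
    ∀ y ∈ Icc (a 0 / (β - 1)) (a d / (β - 1)),
      ∃ j ∈ Iic d, β * y - a j ∈ Icc (a 0 / (β - 1)) (a d / (β - 1)) := by
  rintro y ⟨hyL, hyR⟩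
  have hβ1 : β - 1 ≠ 0 := (sub_pos.2 hβ).ne'
  have hL : β * (a 0 / (β - 1)) = a 0 + a 0 / (β - 1) := by field_simp; ring
  have hR : β * (a d / (β - 1)) = a d + a d / (β - 1) := by field_simp; ring
  have hw : (a d - a 0) / (β - 1) = a d / (β - 1) - a 0 / (β - 1) := sub_div _ _ _
  have hβyL := mul_le_mul_of_nonneg_left hyL (zero_lt_one.trans hβ).le
  have hβyR := mul_le_mul_of_nonneg_left hyR (zero_lt_one.trans hβ).le
  obtain ⟨j, hj, hjt, hjw⟩ := exists_mem_Icc_of_forall_sub_le hgap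
    (t := β * y - a d / (β - 1)) (by linarith) (by linarith)
  exact ⟨j, hj, by linarith, by linarith⟩

/-- for 1 < β ≤ 1 + (a_d − a_0)/max gap, every
x ∈ [a_0/(β−1), a_d/(β−1)] has a β-expansion over the alphabet. -/
theorem stmt_2 (d : ℕ) (hd : 0 < d) (a : ℕ → ℝ) (ha : ∀ i < d, a i < a (i + 1))
    (β : ℝ) (hβ1 : 1 < β)
    (hβ2 : β ≤ 1 + (a d - a 0) /
      ((Finset.range d).sup' (Finset.nonempty_range_iff.2 hd.ne') fun j => a (j + 1) - a j)) :
    ∀ x : ℝ, a 0 / (β - 1) ≤ x → x ≤ a d / (β - 1) →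
      ∃ u : ℕ → ℕ, (∀ k, u k ≤ d) ∧ x = ∑' k : ℕ, a (u k) / β ^ (k + 1) := by
  intro x hxL hxR
  have hgap_le_sup : ∀ j < d, a (j + 1) - a j ≤
      (Finset.range d).sup' (Finset.nonempty_range_iff.2 hd.ne') fun j => a (j + 1) - a j :=
    fun j hj => Finset.le_sup' (fun j => a (j + 1) - a j) (Finset.mem_range.2 hj)
  have hsup_pos := (sub_pos.2 (ha 0 hd)).trans_le (hgap_le_sup 0 hd)
  have hsup_le := (le_div_comm₀ (sub_pos.2 hβ1) hsup_pos).1 (sub_le_iff_le_add'.2 hβ2)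
  obtain ⟨u, hu, hsum⟩ := exists_hasSum_of_forall_exists_mem hβ1 a (Metric.isBounded_Icc _ _)
    (forall_exists_digit_mem_Icc hβ1 fun j hj => (hgap_le_sup j hj).trans hsup_le) ⟨hxL, hxR⟩
  exact ⟨u, hu, hsum.tsum_eq.symm⟩
end

section
/- Let A = {a_0 < a_1 < … < a_d} and 1 < β ≤ 1 + (a_d − a_0)/max_j(a_{j+1} − a_j). A sequence (u_k)_{k≥1} ∈ A^ℕ is the unique β-expansion of its value if and only if for every i ≥ 1: (i) whenever u_i = a_j with j < d one has Σ_{k≥0} u_{i+k} β^{-k} < a_{j+1} + a_0/(β−1), and (ii) whenever u_i = a_j with j > 0 one has Σ_{k≥0} u_{i+k} β^{-k} > a_{j−1} + a_d/(β−1). -/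
/-!
Every value of a digit sequence lies in `[a₀/(β-1), a_d/(β-1)]`, and the bound on `β` says that no
gap `a_{j+1} - a_j` is longer than this interval, so the greedy algorithm expands each of its
points. Writing `T_i` for the value of the tail `u_i u_{i+1} …`, we have `β T_i = u_i + T_{i+1}`.
If condition (i) fails at `i`, the remainder `β T_i - a_{j+1}` still lies in the interval;
replacing `u_i` by `a_{j+1}` and expanding that remainder gives a second expansion, and
symmetrically for (ii). Conversely, an expansion agreeing with `u` before `i` has the same tail
value `T_i`, and (i), (ii) leave `a_j` as the only digit compatible with `β T_i`.
-/

open Set Filter Topology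

noncomputable def betaValue (β : ℝ) (x : ℕ → ℝ) : ℝ := ∑' k, x k / β ^ (k + 1)

section RealSequences

variable {β lo hi : ℝ} {x s : ℕ → ℝ}

lemma hasSum_div_pow_succ (hβ : 1 < β) (c : ℝ) :
    HasSum (fun k : ℕ => c / β ^ (k + 1)) (c / (β - 1)) := by
  have hβ0 : 0 < β := by linarith
  have hβ1 : β - 1 ≠ 0 := sub_ne_zero.2 hβ.ne'
  have hgeom := (hasSum_geometric_of_lt_one (inv_nonneg.2 hβ0.le)
    (inv_lt_one_of_one_lt₀ hβ)).mul_left (c / β)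
  have hterm : (fun k : ℕ => c / β * β⁻¹ ^ k) = fun k => c / β ^ (k + 1) := by
    funext k
    rw [pow_succ, inv_pow]
    field_simp
  rwa [hterm, show c / β * (1 - β⁻¹)⁻¹ = c / (β - 1) by field_simp] at hgeom

lemma summable_div_pow_succ (hβ : 1 < β) (hx : ∀ k, x k ∈ Icc lo hi) :
    Summable fun k => x k / β ^ (k + 1) := by
  refine (hasSum_div_pow_succ hβ (max |lo| |hi|)).summable.of_norm_bounded fun k => ?_
  have hβ0 : 0 < β := by linarith
  rw [norm_div, norm_pow, Real.norm_eq_abs, Real.norm_eq_abs, abs_of_pos hβ0]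
  gcongr
  exact abs_le_max_abs_abs (hx k).1 (hx k).2

lemma betaValue_mem_Icc (hβ : 1 < β) (hx : ∀ k, x k ∈ Icc lo hi) :
    betaValue β x ∈ Icc (lo / (β - 1)) (hi / (β - 1)) := by
  have hβ0 : 0 < β := by linarith
  have hs := (summable_div_pow_succ hβ hx).hasSum
  exact ⟨hasSum_le (fun k => by gcongr; exact (hx k).1) (hasSum_div_pow_succ hβ lo) hs,
    hasSum_le (fun k => by gcongr; exact (hx k).2) hs (hasSum_div_pow_succ hβ hi)⟩

lemma mul_betaValue (hβ : 1 < β) (hx : ∀ k, x k ∈ Icc lo hi) :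
    β * betaValue β x = x 0 + betaValue β fun k => x (k + 1) := by
  have hβ0 : β ≠ 0 := by positivity
  rw [betaValue, (summable_div_pow_succ hβ hx).tsum_eq_zero_add, mul_add, ← tsum_mul_left]
  congr 1
  · rw [zero_add, pow_one]
    field_simp
  · refine tsum_congr fun k => ?_
    rw [pow_succ β (k + 1)]
    field_simp

lemma tsum_div_pow_eq_mul_betaValue (hβ : β ≠ 0) (x : ℕ → ℝ) :
    ∑' k, x k / β ^ k = β * betaValue β x := by
  rw [betaValue, ← tsum_mul_left]
  refine tsum_congr fun k => ?_
  rw [pow_succ]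
  field_simp

lemma hasSum_mul_sub_succ (hβ : 1 < β) (hs : ∀ n, s n ∈ Icc lo hi) :
    HasSum (fun k => (β * s k - s (k + 1)) / β ^ (k + 1)) (s 0) := by
  have hβ0 : 0 < β := by linarith
  have hdigit : ∀ k, β * s k - s (k + 1) ∈ Icc (β * lo - hi) (β * hi - lo) := fun k =>
    ⟨by linarith [mul_le_mul_of_nonneg_left (hs k).1 hβ0.le, (hs (k + 1)).2],
      by linarith [mul_le_mul_of_nonneg_left (hs k).2 hβ0.le, (hs (k + 1)).1]⟩
  have htelescope : ∀ k, (β * s k - s (k + 1)) / β ^ (k + 1) =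
      s k / β ^ k - s (k + 1) / β ^ (k + 1) := fun k => by
    rw [pow_succ]
    field_simp
  have hinv : Tendsto (fun n : ℕ => (β ^ n)⁻¹) atTop (𝓝 0) :=
    tendsto_inv_atTop_zero.comp (tendsto_pow_atTop_atTop_of_one_lt hβ)
  have hlo := hinv.const_mul lo
  have hhi := hinv.const_mul hi
  rw [mul_zero] at hlo hhi
  have hrem : Tendsto (fun n => s n / β ^ n) atTop (𝓝 0) :=
    tendsto_of_tendsto_of_tendsto_of_le_of_le hlo hhi
      (fun n => by rw [← div_eq_mul_inv]; gcongr; exact (hs n).1)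
      (fun n => by rw [← div_eq_mul_inv]; gcongr; exact (hs n).2)
  rw [(summable_div_pow_succ hβ hdigit).hasSum_iff_tendsto_nat]
  simp only [htelescope, Finset.sum_range_sub']
  simpa using tendsto_const_nhds.sub hrem

end RealSequences

section Digits

variable {d : ℕ} {a : ℕ → ℝ} {β : ℝ} {u v : ℕ → ℕ}

lemma digit_mem_Icc (ha : MonotoneOn a (Iic d)) (hu : ∀ k, u k ≤ d) (k : ℕ) :
    a (u k) ∈ Icc (a 0) (a d) :=
  ⟨ha (Nat.zero_le d) (hu k) (Nat.zero_le _), ha (hu k) self_mem_Iic (hu k)⟩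

lemma betaValue_digits_mem_Icc (hβ : 1 < β) (ha : MonotoneOn a (Iic d)) (hu : ∀ k, u k ≤ d) :
    betaValue β (fun k => a (u k)) ∈ Icc (a 0 / (β - 1)) (a d / (β - 1)) :=
  betaValue_mem_Icc hβ (digit_mem_Icc ha hu)

lemma mul_betaValue_tail (hβ : 1 < β) (ha : MonotoneOn a (Iic d)) (hu : ∀ k, u k ≤ d) (i : ℕ) :
    β * betaValue β (fun k => a (u (i + k))) =
      a (u i) + betaValue β fun k => a (u (i + 1 + k)) := by
  rw [mul_betaValue hβ fun k => digit_mem_Icc ha hu (i + k)]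
  simp only [add_zero, add_right_comm i 1, add_assoc]

lemma betaValue_tail_eq_iff (hβ : 1 < β) (ha : MonotoneOn a (Iic d)) (hu : ∀ k, u k ≤ d)
    (hv : ∀ k, v k ≤ d) {i : ℕ} (hpre : ∀ k < i, a (v k) = a (u k)) :
    betaValue β (fun k => a (v (i + k))) = betaValue β (fun k => a (u (i + k))) ↔
      betaValue β (fun k => a (v k)) = betaValue β (fun k => a (u k)) := by
  induction i with
  | zero => simp only [zero_add]
  | succ i ih =>
    rw [← ih fun k hk => hpre k (by omega),
      ← mul_right_inj' (by positivity : β ≠ 0) (b := betaValue β fun k => a (v (i + k))),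
      mul_betaValue_tail hβ ha hv, mul_betaValue_tail hβ ha hu, hpre i (by omega), add_right_inj]

lemma exists_digit_mul_sub_mem_Icc (hβ : 1 < β)
    (hgap : ∀ j < d, a (j + 1) - a j ≤ (a d - a 0) / (β - 1)) {y : ℝ}
    (hy : y ∈ Icc (a 0 / (β - 1)) (a d / (β - 1))) :
    ∃ j ≤ d, β * y - a j ∈ Icc (a 0 / (β - 1)) (a d / (β - 1)) := by
  have hβ0 : 0 < β := by linarith
  have hβ1 : β - 1 ≠ 0 := sub_ne_zero.2 hβ.ne'
  have hlo : β * (a 0 / (β - 1)) - a 0 = a 0 / (β - 1) := by field_simp; ring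
  have hhi : β * (a d / (β - 1)) - a d = a d / (β - 1) := by field_simp; ring
  have hβy := mul_le_mul_of_nonneg_left hy.1 hβ0.le
  have hβy' := mul_le_mul_of_nonneg_left hy.2 hβ0.le
  -- the greedy choice: the largest digit leaving a remainder above the lower end
  set P : ℕ → Prop := fun j => a j ≤ β * y - a 0 / (β - 1)
  set j := Nat.findGreatest P d
  have hj : a j ≤ β * y - a 0 / (β - 1) :=
    Nat.findGreatest_spec (P := P) (Nat.zero_le d) (show a 0 ≤ _ by linarith)
  have hjd : j ≤ d := Nat.findGreatest_le d
  refine ⟨j, hjd, by linarith, ?_⟩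
  rcases hjd.lt_or_eq with hlt | heq
  · have hnext : ¬ a (j + 1) ≤ β * y - a 0 / (β - 1) :=
      Nat.findGreatest_is_greatest (Nat.lt_succ_self j) hlt
    have hgapj := hgap j hlt
    rw [sub_div] at hgapj
    linarith
  · rw [heq]
    linarith

lemma exists_digits_betaValue_eq (hβ : 1 < β)
    (hgap : ∀ j < d, a (j + 1) - a j ≤ (a d - a 0) / (β - 1)) {x : ℝ}
    (hx : x ∈ Icc (a 0 / (β - 1)) (a d / (β - 1))) :
    ∃ w : ℕ → ℕ, (∀ k, w k ≤ d) ∧ betaValue β (fun k => a (w k)) = x := by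
  choose! D hD hDmem using fun y (hy : y ∈ Icc (a 0 / (β - 1)) (a d / (β - 1))) =>
    exists_digit_mul_sub_mem_Icc hβ hgap hy
  set s : ℕ → ℝ := fun n => (fun y => β * y - a (D y))^[n] x
  have hs_succ : ∀ n, s (n + 1) = β * s n - a (D (s n)) := fun n =>
    Function.iterate_succ_apply' _ n x
  have hs : ∀ n, s n ∈ Icc (a 0 / (β - 1)) (a d / (β - 1)) := by
    intro n
    induction n with
    | zero => exact hx
    | succ n ih => rw [hs_succ]; exact hDmem _ ih
  refine ⟨fun k => D (s k), fun k => hD _ (hs k), ?_⟩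
  have hdigit : (fun k => a (D (s k))) = fun k => β * s k - s (k + 1) := by
    funext k
    rw [hs_succ]
    ring
  rw [hdigit]
  exact (hasSum_mul_sub_succ hβ hs).tsum_eq

lemma eq_of_betaValue_tail_eq (hβ : 1 < β) (ha : StrictMonoOn a (Iic d)) (hu : ∀ k, u k ≤ d)
    (hv : ∀ k, v k ≤ d) {i : ℕ}
    (hup : u i < d → β * betaValue β (fun k => a (u (i + k))) < a (u i + 1) + a 0 / (β - 1))
    (hdown : 0 < u i → a (u i - 1) + a d / (β - 1) < β * betaValue β (fun k => a (u (i + k))))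
    (htail : betaValue β (fun k => a (v (i + k))) = betaValue β (fun k => a (u (i + k)))) :
    v i = u i := by
  have hrec := mul_betaValue_tail hβ ha.monotoneOn hv i
  have hrest := betaValue_digits_mem_Icc hβ ha.monotoneOn fun k => hv (i + 1 + k)
  rw [htail] at hrec
  have hui := hu i
  have hvi := hv i
  rcases lt_trichotomy (v i) (u i) with hlt | heq | hgt
  · have hle : a (v i) ≤ a (u i - 1) :=
      ha.monotoneOn (hv i) (by simp only [mem_Iic]; omega) (by omega)
    linarith [hdown (by omega), hrest.2]
  · exact heq
  · have hle : a (u i + 1) ≤ a (v i) :=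
      ha.monotoneOn (by simp only [mem_Iic]; omega) (hv i) (by omega)
    linarith [hup (by omega), hrest.1]

lemma exists_betaValue_eq_of_mul_sub_mem_Icc (hβ : 1 < β) (ha : MonotoneOn a (Iic d))
    (hgap : ∀ j < d, a (j + 1) - a j ≤ (a d - a 0) / (β - 1)) (hu : ∀ k, u k ≤ d) {i m : ℕ}
    (hm : m ≤ d) (hrem : β * betaValue β (fun k => a (u (i + k))) - a m ∈
      Icc (a 0 / (β - 1)) (a d / (β - 1))) :
    ∃ v : ℕ → ℕ, (∀ k, v k ≤ d) ∧
      betaValue β (fun k => a (v k)) = betaValue β (fun k => a (u k)) ∧ v i = m := by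
  obtain ⟨w, hwd, hw⟩ := exists_digits_betaValue_eq hβ hgap hrem
  set v : ℕ → ℕ := fun k => if k < i then u k else if k = i then m else w (k - (i + 1))
  have hvd : ∀ k, v k ≤ d := fun k => by
    simp only [v]
    split_ifs
    exacts [hu k, hm, hwd _]
  have hvi : v i = m := by simp [v]
  have hvw : (fun k => a (v (i + 1 + k))) = fun k => a (w k) := by
    funext k
    simp only [v, if_neg (by omega : ¬ i + 1 + k < i), if_neg (by omega : i + 1 + k ≠ i)]
    congr 2
    omega
  have hpre : ∀ k < i, a (v k) = a (u k) := fun k hk => by simp [v, hk]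
  refine ⟨v, hvd, (betaValue_tail_eq_iff hβ ha hu hvd hpre).1 ?_, hvi⟩
  apply mul_left_cancel₀ (by positivity : β ≠ 0)
  rw [mul_betaValue_tail hβ ha hvd, hvi, hvw, hw]
  ring

end Digits

lemma le_div_sub_one_of_le_one_add_div {g M L β : ℝ} (hg : 0 < g) (hgM : g ≤ M) (hβ : 1 < β)
    (h : β ≤ 1 + L / M) : g ≤ L / (β - 1) := by
  have hM : 0 < M := hg.trans_le hgM
  rw [le_div_iff₀ (by linarith)]
  calc g * (β - 1) ≤ M * (L / M) := by gcongr; linarith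
    _ = L := by field_simp

/-- Pedicini's lexicographic characterization of unique expansions. -/
theorem stmt_3 (d : ℕ) (hd : 0 < d) (a : ℕ → ℝ) (ha : ∀ i < d, a i < a (i + 1))
    (β : ℝ) (hβ1 : 1 < β)
    (hβ2 : β ≤ 1 + (a d - a 0) /
      ((Finset.range d).sup' (Finset.nonempty_range_iff.2 hd.ne') fun j => a (j + 1) - a j))
    (u : ℕ → ℕ) (hu : ∀ k, u k ≤ d) :
    ((∀ v : ℕ → ℕ, (∀ k, v k ≤ d) →
        (∑' k : ℕ, a (v k) / β ^ (k + 1)) = (∑' k : ℕ, a (u k) / β ^ (k + 1)) →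
        ∀ k, a (v k) = a (u k))
      ↔ (∀ i : ℕ,
          (u i < d → (∑' k : ℕ, a (u (i + k)) / β ^ k) < a (u i + 1) + a 0 / (β - 1)) ∧
          (0 < u i → (∑' k : ℕ, a (u (i + k)) / β ^ k) > a (u i - 1) + a d / (β - 1)))) := by
  have hstrict : StrictMonoOn a (Iic d) := strictMonoOn_Iic_of_lt_succ ha
  have hmono := hstrict.monotoneOn
  have hgap : ∀ j < d, a (j + 1) - a j ≤ (a d - a 0) / (β - 1) := fun j hj =>
    le_div_sub_one_of_le_one_add_div (sub_pos.2 (ha j hj))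
      (Finset.le_sup' (fun j => a (j + 1) - a j) (Finset.mem_range.2 hj)) hβ1 hβ2
  simp only [tsum_div_pow_eq_mul_betaValue (by positivity : β ≠ 0)]
  constructor
  · intro huniq i
    have hui := hu i
    have hrec := mul_betaValue_tail hβ1 hmono hu i
    have hrest := betaValue_digits_mem_Icc hβ1 hmono fun k => hu (i + 1 + k)
    -- if a condition fails at i, the neighbouring digit still leaves an expandable remainder
    have hne : ∀ m ≤ d, a m ≠ a (u i) → β * betaValue β (fun k => a (u (i + k))) - a m ∉
        Icc (a 0 / (β - 1)) (a d / (β - 1)) := fun m hm hmu hrem => by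
      obtain ⟨v, hvd, hv, hvi⟩ := exists_betaValue_eq_of_mul_sub_mem_Icc hβ1 hmono hgap hu hm hrem
      exact hmu (hvi ▸ huniq v hvd hv i)
    refine ⟨fun hud => ?_, fun hu0 => ?_⟩
    · have hlt := ha (u i) hud
      by_contra! h
      exact hne _ hud (ne_of_gt hlt) ⟨by linarith, by linarith [hrest.2]⟩
    · have hlt : a (u i - 1) < a (u i) :=
        hstrict (by simp only [mem_Iic]; omega) (hu i) (by omega)
      by_contra! h
      exact hne _ (by omega) hlt.ne ⟨by linarith [hrest.1], by linarith⟩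
  · intro hcond v hvd hv k
    induction k using Nat.strong_induction_on with
    | _ i ih =>
      have htail := (betaValue_tail_eq_iff hβ1 hmono hu hvd ih).2 hv
      rw [eq_of_betaValue_tail_eq hβ1 hstrict hu hvd (hcond i).1 (hcond i).2 htail]
end

section
/- Let σ be a finite composition of substitutions from S = {τ_h : h ≥ 0} with σ(1) ≠ 1, and write σ(1) = 0·w·1 for a finite word w over {0,1}. Then σ(0·1^ω) = 0·(w·0·1)^ω, and in particular 1·w·0 is a cyclic rotation of the word σ(1). -/
def tauL (h : ℕ) (b : Bool) : List Bool :=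
  if b then List.replicate h false ++ [true] else List.replicate (h + 1) false ++ [true]

def joinW (f : ℕ → List Bool) : ℕ → Bool :=
  fun n => (((List.range (n + 1)).map f).flatten).getD n false

def applyTau (h : ℕ) (u : ℕ → Bool) : ℕ → Bool :=
  joinW fun n => tauL h (u n)

/-- Action of τ_h on finite words. -/
def applyTauList (h : ℕ) (l : List Bool) : List Bool :=
  (l.map (tauL h)).flatten

/-- A finite composition σ = τ_{h_0} ∘ τ_{h_1} ∘ … acting on infinite words. -/
def applyComp (hs : List ℕ) (u : ℕ → Bool) : ℕ → Bool :=
  hs.foldr applyTau u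

/-- The same composition acting on finite words. -/
def applyCompList (hs : List ℕ) (l : List Bool) : List Bool :=
  hs.foldr applyTauList l

/- ======== auxiliary development ======== -/

/-- `0 · p^ω` as an infinite word. -/
def perW (p : List Bool) : ℕ → Bool :=
  fun n => if n = 0 then false else p.getD ((n - 1) % p.length) false

/-- `X^j` -/
def powL (X : List Bool) : ℕ → List Bool
  | 0 => []
  | j + 1 => X ++ powL X j

lemma tauL_true (h : ℕ) : tauL h true = List.replicate h false ++ [true] := rfl

lemma tauL_false (h : ℕ) : tauL h false = false :: tauL h true := by
  simp [tauL, List.replicate_succ]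

lemma tauL_ne_nil (h : ℕ) (b : Bool) : tauL h b ≠ [] := by
  cases b <;> simp [tauL]

lemma tauL_true_ne_nil (h : ℕ) : tauL h true ≠ [] := tauL_ne_nil h true

lemma applyTauList_append (h : ℕ) (x y : List Bool) :
    applyTauList h (x ++ y) = applyTauList h x ++ applyTauList h y := by
  simp [applyTauList]

lemma applyTauList_singleton (h : ℕ) (b : Bool) : applyTauList h [b] = tauL h b := by
  simp [applyTauList]

lemma powL_length (X : List Bool) (j : ℕ) : (powL X j).length = j * X.length := by
  induction j with
  | zero => simp [powL]
  | succ j ih => simp [powL, ih, Nat.succ_mul]; ring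

lemma powL_append (X : List Bool) (j : ℕ) : powL X j ++ X = X ++ powL X j := by
  induction j with
  | zero => simp [powL]
  | succ j ih => simp only [powL, List.append_assoc, ih]

lemma powL_getD (X : List Bool) (j i : ℕ) (hi : i < j * X.length) :
    (powL X j).getD i false = X.getD (i % X.length) false := by
  induction j generalizing i with
  | zero => simp at hi
  | succ j ih =>
    by_cases hX : i < X.length
    · rw [powL, List.getD_append _ _ _ _ hX, Nat.mod_eq_of_lt hX]
    · push_neg at hX
      rw [powL, List.getD_append_right _ _ _ _ hX, Nat.mod_eq_sub_mod hX]
      apply ih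
      have hsm : (j + 1) * X.length = j * X.length + X.length := by ring
      omega

lemma powL_swap (A B : List Bool) (j : ℕ) :
    A ++ powL (B ++ A) j = powL (A ++ B) j ++ A := by
  induction j with
  | zero => simp [powL]
  | succ j ih =>
    show A ++ ((B ++ A) ++ powL (B ++ A) j) = ((A ++ B) ++ powL (A ++ B) j) ++ A
    rw [List.append_assoc, List.append_assoc, ← ih]
    simp [List.append_assoc]

lemma flatten_range_len (f : ℕ → List Bool) (hf : ∀ i, f i ≠ []) (m : ℕ) :
    m + 1 ≤ ((List.range (m + 1)).map f).flatten.length := by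
  induction m with
  | zero =>
    simp only [List.range_succ, List.range_zero, List.nil_append, List.map_cons, List.map_nil,
      List.flatten_cons, List.flatten_nil, List.append_nil]
    exact List.length_pos_iff.mpr (hf 0)
  | succ m ih =>
    rw [List.range_succ, List.map_append, List.flatten_append]
    simp only [List.length_append]
    have : 1 ≤ ((List.map f [m + 1]).flatten).length := by
      simp only [List.map_cons, List.map_nil, List.flatten_cons, List.flatten_nil, List.append_nil]
      exact List.length_pos_iff.mpr (hf (m + 1))
    omega

lemma joinW_eval (f : ℕ → List Bool) (hf : ∀ i, f i ≠ []) (n m : ℕ) (hnm : n ≤ m) :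
    joinW f n = (((List.range (m + 1)).map f).flatten).getD n false := by
  induction m with
  | zero =>
    have : n = 0 := by omega
    subst this; rfl
  | succ m ih =>
    rcases Nat.lt_or_ge n (m + 1) with hlt | hge
    · have hpre : n < ((List.range (m + 1)).map f).flatten.length :=
        lt_of_lt_of_le hlt (flatten_range_len f hf m)
      have hrs : List.range (m + 1 + 1) = List.range (m + 1) ++ [m + 1] := by
        rw [List.range_succ]
      rw [hrs, List.map_append, List.flatten_append,
        List.getD_append _ _ _ _ hpre]
      exact ih (by omega)
    · have : n = m + 1 := by omega
      subst this; rfl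

lemma map_range_getD (l : List Bool) (g : Bool → List Bool) :
    (List.range l.length).map (fun i => g (l.getD i false)) = l.map g := by
  apply List.ext_getElem
  · simp
  · intro i h1 h2
    simp only [List.getElem_map, List.getElem_range]
    rw [List.getD_eq_getElem l false (by simpa using h2)]

lemma flat_periodic (h : ℕ) (P : List Bool) (j : ℕ) :
    ((List.range (j * P.length + 1)).map (fun k => tauL h (perW P k))).flatten
      = tauL h false ++ powL (applyTauList h P) j := by
  induction j with
  | zero => simp [powL, perW, List.range_succ]
  | succ j ih =>
    have hrange : (j + 1) * P.length + 1 = (j * P.length + 1) + P.length := by ring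
    rw [hrange, List.range_add, List.map_append, List.flatten_append, ih]
    have hmap : (List.range P.length).map
        ((fun k => tauL h (perW P k)) ∘ (fun i => (j * P.length + 1) + i))
        = P.map (tauL h) := by
      rw [← map_range_getD P (tauL h)]
      apply List.map_congr_left
      intro i hi
      rw [List.mem_range] at hi
      simp only [Function.comp]
      congr 1
      show perW P (j * P.length + 1 + i) = P.getD i false
      unfold perW
      rw [if_neg (by omega)]
      congr 1
      have : j * P.length + 1 + i - 1 = i + j * P.length := by omega
      rw [this, Nat.add_mul_mod_self_right, Nat.mod_eq_of_lt hi]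
    rw [List.map_map, hmap]
    show tauL h false ++ powL (applyTauList h P) j ++ applyTauList h P = _
    rw [List.append_assoc, powL_append]
    rfl

lemma false_cons_replicate (h : ℕ) (l : List Bool) :
    false :: (List.replicate h false ++ l) = List.replicate h false ++ (false :: l) := by
  induction h with
  | zero => rfl
  | succ h ih => simp [List.replicate_succ, ih]

lemma core (h : ℕ) (P B : List Bool) (hP : P ≠ [])
    (hB : applyTauList h P = B ++ tauL h true) :
    applyTau h (perW P) = perW (tauL h true ++ B) := by
  set A := tauL h true with hA
  set Q := A ++ B with hQ
  have hQlen : 1 ≤ Q.length := by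
    have := tauL_true_ne_nil h
    rw [hQ, List.length_append]
    have : 0 < A.length := List.length_pos_iff.mpr (tauL_true_ne_nil h)
    omega
  funext n
  have hPlen : 1 ≤ P.length := List.length_pos_iff.mpr hP
  have hle : n ≤ (n + 1) * P.length := by nlinarith
  show joinW (fun k => tauL h (perW P k)) n = perW Q n
  rw [joinW_eval _ (fun i => tauL_ne_nil h _) n ((n + 1) * P.length) hle,
    flat_periodic h P (n + 1), hB]
  have key : tauL h false ++ powL (B ++ A) (n + 1) = [false] ++ (powL Q (n + 1) ++ A) := by
    rw [tauL_false]
    show [false] ++ (A ++ powL (B ++ A) (n + 1)) = _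
    rw [powL_swap A B (n + 1)]
  rw [key]
  cases n with
  | zero => rfl
  | succ n' =>
    show (false :: (powL Q (n' + 2) ++ A)).getD (n' + 1) false = perW Q (n' + 1)
    rw [List.getD_cons_succ]
    have hlt : n' < (powL Q (n' + 2)).length := by
      rw [powL_length]; nlinarith
    rw [List.getD_append _ _ _ _ hlt, powL_getD Q (n' + 2) n' (by rw [powL_length] at hlt; exact hlt)]
    rfl

lemma rot_append (X Y : List Bool) : (X ++ Y).rotate X.length = Y ++ X := by
  rw [List.rotate_eq_drop_append_take (by simp), List.drop_left, List.take_left]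

lemma exists_rot_decomp (l : List Bool) (k : ℕ) :
    ∃ a b, l = a ++ b ∧ l.rotate k = b ++ a := by
  rcases eq_or_ne l [] with rfl | hl
  · exact ⟨[], [], rfl, by simp⟩
  · have hpos : 0 < l.length := List.length_pos_iff.mpr hl
    refine ⟨l.take (k % l.length), l.drop (k % l.length), by simp, ?_⟩
    rw [← List.rotate_mod, List.rotate_eq_drop_append_take (le_of_lt (Nat.mod_lt _ hpos))]

lemma perW_true : perW [true] = fun n => decide (0 < n) := by
  funext n
  cases n with
  | zero => rfl
  | succ n => simp [perW, Nat.mod_one]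

lemma main (hs : List ℕ) :
    (applyCompList hs [true] = [true] ∧
      applyComp hs (fun n => decide (0 < n)) = perW [true]) ∨
    (∃ w, applyCompList hs [true] = [false] ++ w ++ [true] ∧
      applyComp hs (fun n => decide (0 < n)) = perW (w ++ [false, true]) ∧
      ∃ k, (applyCompList hs [true]).rotate k = [true] ++ w ++ [false]) := by
  induction hs with
  | nil => exact Or.inl ⟨rfl, perW_true.symm⟩
  | cons h rest ih =>
    have hCL : applyCompList (h :: rest) [true] = applyTauList h (applyCompList rest [true]) := rfl
    have hC : applyComp (h :: rest) (fun n => decide (0 < n))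
        = applyTau h (applyComp rest (fun n => decide (0 < n))) := rfl
    rcases ih with ⟨ih1, ih2⟩ | ⟨v, ih1, ih2, k, ihk⟩
    · -- rest acts trivially
      have hs1 : applyCompList (h :: rest) [true] = tauL h true := by
        rw [hCL, ih1, applyTauList_singleton]
      have hsu : applyComp (h :: rest) (fun n => decide (0 < n)) = perW (tauL h true) := by
        rw [hC, ih2]
        have := core h [true] [] (by simp) (by simp [applyTauList_singleton])
        simpa using this
      cases h with
      | zero =>
        left
        constructor
        · rw [hs1]; simp [tauL]
        · rw [hsu]; norm_num [tauL]
      | succ h' =>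
        right
        refine ⟨List.replicate h' false, ?_, ?_, ⟨h' + 1, ?_⟩⟩
        · rw [hs1, tauL_true]
          simp [List.replicate_succ]
        · rw [hsu, tauL_true]
          simp [List.replicate_succ', List.append_assoc]
        · rw [hs1, tauL_true]
          have hr := rot_append (List.replicate (h' + 1) false) [true]
          simp only [List.length_replicate] at hr
          rw [hr]
          simp [List.replicate_succ']
      -- end left case
    · -- rest gives 0 v 1
      set tv := applyTauList h v with htv
      have hs1 : applyCompList (h :: rest) [true]
          = tauL h false ++ tv ++ tauL h true := by
        rw [hCL, ih1]
        simp only [htv, applyTauList_append, applyTauList_singleton]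
      set w' := tauL h true ++ tv ++ List.replicate h false with hw'
      right
      refine ⟨w', ?_, ?_, ?_⟩
      · -- σ(1) = 0 w' 1
        rw [hs1, tauL_false, tauL_true]
        simp [hw', tauL_true, List.append_assoc, List.replicate_succ']
      · -- infinite word
        rw [hC, ih2]
        have hcore := core h (v ++ [false, true]) (tv ++ tauL h false)
          (by simp)
          (by simp [htv, applyTauList, List.append_assoc])
        rw [hcore]
        rw [hw', tauL_false, tauL_true]
        simp [List.append_assoc, List.replicate_succ', false_cons_replicate]
      · -- rotation
        obtain ⟨a, b, hab, hrot⟩ := exists_rot_decomp (applyCompList rest [true]) k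
        have hba : b ++ a = [true] ++ v ++ [false] := by rw [← hrot, ihk]
        set X := tauL h true ++ (tv ++ List.replicate (h + 1) false) with hX
        refine ⟨(applyTauList h a).length + X.length, ?_⟩
        rw [← List.rotate_rotate]
        have e1 : applyCompList (h :: rest) [true]
            = applyTauList h a ++ applyTauList h b := by
          rw [hCL, hab, applyTauList_append]
        rw [e1, rot_append]
        have e2 : applyTauList h b ++ applyTauList h a = X ++ [true] := by
          rw [← applyTauList_append, hba]
          simp only [applyTauList_append, applyTauList_singleton, hX, htv]
          rw [tauL_false, tauL_true]
          simp [List.append_assoc, List.replicate_succ, false_cons_replicate]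
        rw [e2, rot_append]
        rw [hX, hw', tauL_true]
        simp [List.append_assoc, List.replicate_succ', false_cons_replicate]

/-- if σ(1) = 0·w·1 (in particular σ(1) ≠ 1), then σ(0·1^ω) = 0·(w·0·1)^ω
and 1·w·0 is a cyclic rotation of σ(1). -/
theorem stmt_6 (hs : List ℕ) (w : List Bool)
    (h1 : applyCompList hs [true] = [false] ++ w ++ [true]) :
    (applyComp hs (fun n => decide (0 < n)) =
      fun n => if n = 0 then false
        else (w ++ [false, true]).getD ((n - 1) % (w ++ [false, true]).length) false) ∧
    ∃ k, (applyCompList hs [true]).rotate k = [true] ++ w ++ [false] := by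
  rcases main hs with ⟨m1, _⟩ | ⟨w2, m1, m2, k, mk⟩
  · rw [h1] at m1; simp at m1
  · have hww : w = w2 := by
      rw [h1] at m1
      simpa using m1
    subst hww
    exact ⟨m2, ⟨k, mk⟩⟩
end

section
/- For every infinite word u = u_0 u_1 … ∈ {0,1}^ℕ there is a unique real number m ≥ 1 satisfying m = 1 + Σ_{k≥0} u_k (1+√m)^{-k}, and m = 1 if and only if u is the all-zero word. -/
open Real

lemma two_le (m : ℝ) (hm : 1 ≤ m) : 2 ≤ 1 + Real.sqrt m := by
  have h1 : (1:ℝ) ≤ Real.sqrt m := by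
    rw [show (1:ℝ) = Real.sqrt 1 by simp]
    exact Real.sqrt_le_sqrt hm
  linarith

lemma summ (u : ℕ → Bool) {m : ℝ} (hm : 1 ≤ m) :
    Summable (fun k : ℕ => (if u k then (1:ℝ) else 0) / (1 + Real.sqrt m) ^ k) := by
  have h2 := two_le m hm
  refine Summable.of_nonneg_of_le (fun k => by positivity) (fun k => ?_)
    (summable_geometric_of_lt_one (r := (1/2 : ℝ)) (by norm_num) (by norm_num))
  calc (if u k then (1:ℝ) else 0) / (1 + Real.sqrt m) ^ k
      ≤ 1 / (1 + Real.sqrt m) ^ k := by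
        gcongr
        split <;> norm_num
    _ ≤ 1 / 2 ^ k := by gcongr
    _ = (1/2 : ℝ) ^ k := by rw [div_pow, one_pow]

noncomputable def FF (u : ℕ → Bool) (m : ℝ) : ℝ :=
  1 + ∑' k : ℕ, (if u k then (1:ℝ) else 0) / (1 + Real.sqrt (max 1 m)) ^ k

lemma FF_eq (u : ℕ → Bool) {m : ℝ} (hm : 1 ≤ m) :
    FF u m = 1 + ∑' k : ℕ, (if u k then (1:ℝ) else 0) / (1 + Real.sqrt m) ^ k := by
  rw [FF, max_eq_right hm]

lemma tsum_nn (u : ℕ → Bool) (m : ℝ) :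
    0 ≤ ∑' k : ℕ, (if u k then (1:ℝ) else 0) / (1 + Real.sqrt m) ^ k := by
  refine tsum_nonneg fun k => ?_
  have : 0 ≤ Real.sqrt m := Real.sqrt_nonneg m
  positivity

lemma FF_anti (u : ℕ → Bool) {a b : ℝ} (ha : 1 ≤ a) (hab : a ≤ b) :
    FF u b ≤ FF u a := by
  rw [FF_eq u ha, FF_eq u (ha.trans hab)]
  have hb : 1 ≤ b := ha.trans hab
  have hsa := two_le a ha
  have hsb := two_le b hb
  have hs : Real.sqrt a ≤ Real.sqrt b := Real.sqrt_le_sqrt hab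
  gcongr 1 + ?_
  refine Summable.tsum_le_tsum (fun k => ?_) (summ u hb) (summ u ha)
  gcongr

lemma FF_four (u : ℕ → Bool) : FF u 4 ≤ 5/2 := by
  have h4 : Real.sqrt (max 1 (4:ℝ)) = 2 := by
    rw [max_eq_right (by norm_num : (1:ℝ) ≤ 4),
      show (4:ℝ) = 2^2 by norm_num, Real.sqrt_sq (by norm_num)]
  rw [FF, h4]
  have hsum : ∑' k : ℕ, (if u k then (1:ℝ) else 0) / (1 + 2) ^ k ≤
      ∑' k : ℕ, (1/3 : ℝ) ^ k := by
    refine Summable.tsum_le_tsum (fun k => ?_) (by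
      have := summ u (m := 4) (by norm_num)
      rwa [show Real.sqrt 4 = 2 by
        rw [show (4:ℝ) = 2^2 by norm_num, Real.sqrt_sq (by norm_num)]] at this)
      (summable_geometric_of_lt_one (by norm_num) (by norm_num))
    rw [show ((1:ℝ)/3)^k = 1/3^k by rw [div_pow, one_pow]]
    gcongr
    · split <;> norm_num
    · norm_num
  have hg : ∑' k : ℕ, (1/3 : ℝ) ^ k = 3/2 := by
    rw [tsum_geometric_of_lt_one (by norm_num) (by norm_num)]; norm_num
  rw [hg] at hsum
  norm_num at hsum ⊢
  linarith

lemma FF_cont (u : ℕ → Bool) : Continuous (FF u) := by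
  refine continuous_const.add ?_
  refine continuous_tsum (f := fun k m => (if u k then (1:ℝ) else 0) / (1 + Real.sqrt (max 1 m)) ^ k)
    (u := fun k => (1/2 : ℝ) ^ k) (fun k => ?_)
    (summable_geometric_of_lt_one (by norm_num) (by norm_num)) (fun k m => ?_)
  · refine Continuous.div continuous_const
      ((continuous_const.add (Real.continuous_sqrt.comp (continuous_const.max continuous_id))).pow k)
      (fun m => ?_)
    have h2 := two_le (max 1 m) (le_max_left 1 m)
    positivity
  · have h2 := two_le (max 1 m) (le_max_left 1 m)
    rw [Real.norm_eq_abs, abs_of_nonneg (by positivity)]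
    calc (if u k then (1:ℝ) else 0) / (1 + Real.sqrt (max 1 m)) ^ k
        ≤ 1 / (1 + Real.sqrt (max 1 m)) ^ k := by
          gcongr
          split <;> norm_num
      _ ≤ 1 / 2 ^ k := by gcongr
      _ = (1/2 : ℝ) ^ k := by rw [div_pow, one_pow]

lemma fix_unique (u : ℕ → Bool) {a b : ℝ} (ha : 1 ≤ a) (hb : 1 ≤ b)
    (hfa : a = FF u a) (hfb : b = FF u b) : a = b := by
  rcases lt_trichotomy a b with h | h | h
  · have := FF_anti u ha h.le
    rw [← hfa, ← hfb] at this
    linarith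
  · exact h
  · have := FF_anti u hb h.le
    rw [← hfa, ← hfb] at this
    linarith

/-- for every u ∈ {0,1}^ℕ there is a unique m ≥ 1 with
m = 1 + Σ_{k≥0} u_k (1+√m)^{-k}, and m = 1 iff u = 0^ω. -/
theorem stmt_8 (u : ℕ → Bool) :
    (∃! m : ℝ, 1 ≤ m ∧
      m = 1 + ∑' k : ℕ, (if u k then (1 : ℝ) else 0) / (1 + Real.sqrt m) ^ k) ∧
    (∀ m : ℝ, 1 ≤ m →
      m = 1 + (∑' k : ℕ, (if u k then (1 : ℝ) else 0) / (1 + Real.sqrt m) ^ k) →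
      (m = 1 ↔ u = fun _ => false)) := by
  constructor
  · -- existence and uniqueness
    have hc : Continuous fun m : ℝ => m - FF u m := continuous_id.sub (FF_cont u)
    have h1 : (1:ℝ) - FF u 1 ≤ 0 := by
      rw [FF_eq u le_rfl]
      linarith [tsum_nn u 1]
    have h4 : (0:ℝ) ≤ 4 - FF u 4 := by linarith [FF_four u]
    obtain ⟨m, hmem, heq⟩ := intermediate_value_Icc (by norm_num : (1:ℝ) ≤ 4)
      hc.continuousOn ⟨h1, h4⟩
    have hm1 : 1 ≤ m := hmem.1
    have hfix : m = FF u m := by simp only at heq; linarith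
    refine ⟨m, ⟨hm1, ?_⟩, fun y hy => ?_⟩
    · nth_rewrite 1 [hfix]
      exact FF_eq u hm1
    exact fix_unique u hy.1 hm1 (by rw [FF_eq u hy.1]; exact hy.2) hfix
  · intro m hm hmeq
    constructor
    · intro h1
      subst h1
      rw [Real.sqrt_one] at hmeq
      have hsum : ∑' k : ℕ, (if u k then (1:ℝ) else 0) / (1 + 1) ^ k = 0 := by
        linarith
      have hs : Summable (fun k : ℕ => (if u k then (1:ℝ) else 0) / (1 + 1) ^ k) := by
        have := summ u (m := 1) le_rfl
        rwa [Real.sqrt_one] at this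
      funext k
      have hle := Summable.le_tsum hs k (fun j _ => by positivity)
      rw [hsum] at hle
      by_contra hk
      simp only [Bool.not_eq_false] at hk
      rw [hk] at hle
      simp only [if_true] at hle
      have : (0:ℝ) < 1 / (1 + 1) ^ k := by positivity
      linarith
    · intro hu
      subst hu
      simpa using hmeq
end

section
/- Let m ∈ (1,2] and 1 < β < 2. Then the only unique β-expansions over the alphabet {0,1,m} are the constant sequences 0,0,0,… and m,m,m,… -/
open Finset

noncomputable def gd (m β x : ℝ) : ℝ :=
  if m ≤ β * x then m else if 1 ≤ β * x then 1 else 0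

noncomputable def gs (m β x : ℝ) : ℕ → ℝ
  | 0 => x
  | n+1 => β * gs m β x n - gd m β (gs m β x n)

lemma gd_mem (m β x : ℝ) : gd m β x = 0 ∨ gd m β x = 1 ∨ gd m β x = m := by
  unfold gd; split_ifs <;> tauto

lemma gs_invariant {m β : ℝ} (hm1 : 1 < m) (hβ1 : 1 < β) (hβ2 : β < 2) {x : ℝ}
    (hx0 : 0 ≤ x) (hx1 : x ≤ m / (β - 1)) :
    ∀ n, 0 ≤ gs m β x n ∧ gs m β x n ≤ m / (β - 1) := by
  have hb : 0 < β - 1 := by linarith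
  have hm0 : 0 < m := by linarith
  have hMm : m ≤ m / (β - 1) := by rw [le_div_iff₀ hb]; nlinarith
  have hβM : β * (m / (β - 1)) = m / (β - 1) + m := by field_simp; ring
  intro n
  induction n with
  | zero => exact ⟨hx0, hx1⟩
  | succ n ih =>
    obtain ⟨h0, h1⟩ := ih
    have hgs : gs m β x (n+1) = β * gs m β x n - gd m β (gs m β x n) := rfl
    rw [hgs]
    unfold gd
    split_ifs with h2 h3
    · refine ⟨by linarith, ?_⟩
      have : β * gs m β x n ≤ β * (m / (β - 1)) := by nlinarith
      linarith
    · push_neg at h2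
      exact ⟨by linarith, by linarith⟩
    · push_neg at h3
      refine ⟨by nlinarith, by linarith⟩

lemma gs_sum {m β : ℝ} (hβ1 : 1 < β) (x : ℝ) :
    ∀ n, x = (∑ k ∈ Finset.range n, gd m β (gs m β x k) / β ^ (k + 1)) + gs m β x n / β ^ n := by
  have hβ0 : (0:ℝ) < β := by linarith
  intro n
  induction n with
  | zero => simp [gs]
  | succ n ih =>
    rw [Finset.sum_range_succ, add_assoc]
    have hpow : β ^ n ≠ 0 := by positivity
    have hpow2 : β ^ (n+1) ≠ 0 := by positivity
    have h2 : gd m β (gs m β x n) / β ^ (n + 1) + gs m β x (n+1) / β ^ (n+1)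
        = gs m β x n / β ^ n := by
      have hgs : gs m β x (n+1) = β * gs m β x n - gd m β (gs m β x n) := rfl
      rw [hgs]
      field_simp
      ring
    rw [h2]
    exact ih

lemma summable_dig {m β : ℝ} (hm0 : 0 < m) (hβ1 : 1 < β) {w : ℕ → ℝ}
    (hw : ∀ k, 0 ≤ w k ∧ w k ≤ m) : Summable (fun k : ℕ => w k / β ^ (k + 1)) := by
  have hβ0 : (0:ℝ) < β := by linarith
  have hr0 : (0:ℝ) ≤ 1/β := by positivity
  have hr1 : 1/β < 1 := by rw [div_lt_one hβ0]; exact hβ1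
  have hg0 : Summable (fun k : ℕ => m * (1/β) ^ k) :=
    (summable_geometric_of_lt_one hr0 hr1).mul_left m
  have hg : Summable (fun k : ℕ => m * (1/β) ^ (k + 1)) :=
    (summable_nat_add_iff 1).2 hg0
  apply Summable.of_nonneg_of_le (fun k => div_nonneg (hw k).1 (by positivity)) _ hg
  intro k
  have he : m * (1/β) ^ (k+1) = m / β ^ (k+1) := by rw [div_pow]; ring
  rw [he]
  gcongr
  exact (hw k).2

lemma tsum_geom_aux {β : ℝ} (hβ1 : 1 < β) : ∑' k : ℕ, (1/β) ^ (k + 1) = 1 / (β - 1) := by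
  have hβ0 : (0:ℝ) < β := by linarith
  have hr0 : (0:ℝ) ≤ 1/β := by positivity
  have hr1 : 1/β < 1 := by rw [div_lt_one hβ0]; exact hβ1
  have h : ∑' k : ℕ, (1/β) ^ k = (1 - 1/β)⁻¹ := tsum_geometric_of_lt_one hr0 hr1
  have h2 : ∑' k : ℕ, (1/β) ^ (k + 1) = (1/β) * ∑' k : ℕ, (1/β) ^ k := by
    rw [← tsum_mul_left]
    congr 1; funext k; rw [pow_succ]; ring
  rw [h2, h]
  have hb : β - 1 ≠ 0 := by linarith
  have hb2 : 1 - 1/β ≠ 0 := by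
    have : 1 - 1/β > 0 := by linarith
    linarith
  field_simp

lemma tsum_geom_aux' {m β : ℝ} (hβ1 : 1 < β) :
    ∑' k : ℕ, m * (1/β) ^ (k + 1) = m / (β - 1) := by
  rw [tsum_mul_left, tsum_geom_aux hβ1]; ring

lemma tsum_dig_bounds {m β : ℝ} (hm0 : 0 < m) (hβ1 : 1 < β) {w : ℕ → ℝ}
    (hw : ∀ k, 0 ≤ w k ∧ w k ≤ m) :
    0 ≤ ∑' k : ℕ, w k / β ^ (k + 1) ∧ (∑' k : ℕ, w k / β ^ (k + 1)) ≤ m / (β - 1) := by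
  have hβ0 : (0:ℝ) < β := by linarith
  have hr0 : (0:ℝ) ≤ 1/β := by positivity
  have hr1 : 1/β < 1 := by rw [div_lt_one hβ0]; exact hβ1
  have hg0 : Summable (fun k : ℕ => m * (1/β) ^ k) :=
    (summable_geometric_of_lt_one hr0 hr1).mul_left m
  have hg : Summable (fun k : ℕ => m * (1/β) ^ (k + 1)) :=
    (summable_nat_add_iff 1).2 hg0
  constructor
  · exact tsum_nonneg (fun k => div_nonneg (hw k).1 (by positivity))
  · calc (∑' k : ℕ, w k / β ^ (k + 1)) ≤ ∑' k : ℕ, m * (1/β) ^ (k + 1) := by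
          apply Summable.tsum_le_tsum _ (summable_dig hm0 hβ1 hw) hg
          intro k
          have he : m * (1/β) ^ (k+1) = m / β ^ (k+1) := by rw [div_pow]; ring
          rw [he]; gcongr; exact (hw k).2
      _ = m / (β - 1) := tsum_geom_aux' hβ1

noncomputable def Xv (β : ℝ) (w : ℕ → ℝ) (k : ℕ) : ℝ := ∑' j : ℕ, w (k + j) / β ^ (j + 1)

lemma tsum_split {m β : ℝ} (hm0 : 0 < m) (hβ1 : 1 < β) {w : ℕ → ℝ}
    (hw : ∀ j, 0 ≤ w j ∧ w j ≤ m) (k : ℕ) :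
    (∑' j : ℕ, w j / β ^ (j + 1))
      = (∑ j ∈ Finset.range k, w j / β ^ (j + 1)) + (1 / β ^ k) * Xv β w k := by
  have hβ0 : (0:ℝ) < β := by linarith
  have hs : Summable (fun j : ℕ => w j / β ^ (j + 1)) := summable_dig hm0 hβ1 hw
  rw [← Summable.sum_add_tsum_nat_add k hs]
  congr 1
  rw [Xv, ← tsum_mul_left]
  congr 1; funext i
  rw [add_comm i k, show k + i + 1 = k + (i + 1) from rfl, pow_add]
  ring

lemma Xv_rec {m β : ℝ} (hm0 : 0 < m) (hβ1 : 1 < β) {w : ℕ → ℝ}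
    (hw : ∀ j, 0 ≤ w j ∧ w j ≤ m) (k : ℕ) :
    Xv β w k = w k / β + (1/β) * Xv β w (k + 1) := by
  have hβ0 : (0:ℝ) < β := by linarith
  have hsg : Summable (fun j : ℕ => w (k + j) / β ^ (j + 1)) :=
    summable_dig hm0 hβ1 (fun j => hw (k + j))
  rw [Xv, Summable.tsum_eq_zero_add hsg]
  congr 1
  · simp
  · rw [Xv, ← tsum_mul_left]
    congr 1; funext j
    rw [show k + (j + 1) = k + 1 + j by omega, pow_succ]
    ring

lemma Xv_bounds {m β : ℝ} (hm0 : 0 < m) (hβ1 : 1 < β) {w : ℕ → ℝ}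
    (hw : ∀ j, 0 ≤ w j ∧ w j ≤ m) (k : ℕ) :
    0 ≤ Xv β w k ∧ Xv β w k ≤ m / (β - 1) :=
  tsum_dig_bounds hm0 hβ1 (fun j => hw (k + j))

lemma dig_bounds {m : ℝ} (hm1 : 1 < m) {w : ℕ → ℝ}
    (hw : ∀ k, w k = 0 ∨ w k = 1 ∨ w k = m) : ∀ k, 0 ≤ w k ∧ w k ≤ m := by
  intro k
  rcases hw k with h|h|h <;> rw [h] <;> constructor <;> linarith

lemma greedy {m β : ℝ} (hm1 : 1 < m) (hβ1 : 1 < β) (hβ2 : β < 2) {x : ℝ}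
    (hx0 : 0 ≤ x) (hx1 : x ≤ m / (β - 1)) :
    ∃ w : ℕ → ℝ, (∀ k, w k = 0 ∨ w k = 1 ∨ w k = m) ∧ (∑' k : ℕ, w k / β ^ (k + 1)) = x := by
  have hβ0 : (0:ℝ) < β := by linarith
  have hm0 : (0:ℝ) < m := by linarith
  have hr0 : (0:ℝ) ≤ 1/β := by positivity
  have hr1 : 1/β < 1 := by rw [div_lt_one hβ0]; exact hβ1
  refine ⟨fun k => gd m β (gs m β x k), fun k => gd_mem m β _, ?_⟩
  set f : ℕ → ℝ := fun k => gd m β (gs m β x k) / β ^ (k + 1) with hf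
  have hwb : ∀ k, 0 ≤ gd m β (gs m β x k) ∧ gd m β (gs m β x k) ≤ m :=
    dig_bounds hm1 (fun k => gd_mem m β _)
  have hs : Summable f := summable_dig hm0 hβ1 hwb
  have h1 : Filter.Tendsto (fun n => ∑ k ∈ Finset.range n, f k) Filter.atTop (nhds (∑' k, f k)) :=
    hs.hasSum.tendsto_sum_nat
  have htail : Filter.Tendsto (fun n => gs m β x n / β ^ n) Filter.atTop (nhds 0) := by
    apply squeeze_zero
      (fun n => div_nonneg (gs_invariant hm1 hβ1 hβ2 hx0 hx1 n).1 (by positivity))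
      (g := fun n => (m / (β - 1)) * (1/β) ^ n)
    · intro n
      have hb := (gs_invariant hm1 hβ1 hβ2 hx0 hx1 n).2
      have he : (m / (β - 1)) * (1/β) ^ n = (m / (β - 1)) / β ^ n := by rw [div_pow]; ring
      rw [he]
      gcongr
    · have := (tendsto_pow_atTop_nhds_zero_of_lt_one hr0 hr1).const_mul (m / (β - 1))
      simpa using this
  have h2 : Filter.Tendsto (fun n => ∑ k ∈ Finset.range n, f k) Filter.atTop (nhds x) := by
    have heq : (fun n => ∑ k ∈ Finset.range n, f k) = fun n => x - gs m β x n / β ^ n := by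
      funext n
      have := gs_sum (m := m) hβ1 x n
      rw [hf]
      linarith
    rw [heq]
    simpa using (tendsto_const_nhds (x := x) (f := Filter.atTop)).sub htail
  exact tendsto_nhds_unique h1 h2

lemma swap {m β : ℝ} (hm1 : 1 < m) (hβ1 : 1 < β) (hβ2 : β < 2) {u : ℕ → ℝ}
    (hu : ∀ k, u k = 0 ∨ u k = 1 ∨ u k = m)
    (huniq : ∀ v : ℕ → ℝ, (∀ k, v k = 0 ∨ v k = 1 ∨ v k = m) →
        (∑' k : ℕ, v k / β ^ (k + 1)) = (∑' k : ℕ, u k / β ^ (k + 1)) → v = u)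
    (k : ℕ) (d : ℝ) (hd : d = 0 ∨ d = 1 ∨ d = m) (hne : d ≠ u k)
    (hy0 : 0 ≤ Xv β u (k + 1) + u k - d) (hy1 : Xv β u (k + 1) + u k - d ≤ m / (β - 1)) :
    False := by
  have hm0 : (0:ℝ) < m := by linarith
  have hβ0 : (0:ℝ) < β := by linarith
  have hub := dig_bounds hm1 hu
  obtain ⟨w, hw, hwsum⟩ := greedy hm1 hβ1 hβ2 hy0 hy1
  set v : ℕ → ℝ := fun j => if j < k then u j else if j = k then d else w (j - (k + 1)) with hv
  have hvd : ∀ j, v j = 0 ∨ v j = 1 ∨ v j = m := by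
    intro j; rw [hv]; dsimp only; split_ifs
    exacts [hu j, hd, hw _]
  have hvb := dig_bounds hm1 hvd
  have hvk : v k = d := by rw [hv]; simp
  have hXveq : Xv β v (k + 1) = Xv β u (k + 1) + u k - d := by
    rw [← hwsum, Xv]
    congr 1; funext j
    have h1 : ¬ (k + 1 + j < k) := by omega
    have h2 : ¬ (k + 1 + j = k) := by omega
    rw [hv]; dsimp only; rw [if_neg h1, if_neg h2]
    congr 2
    omega
  have heq : (∑' j : ℕ, v j / β ^ (j + 1)) = ∑' j : ℕ, u j / β ^ (j + 1) := by
    rw [tsum_split hm0 hβ1 hvb (k+1), tsum_split hm0 hβ1 hub (k+1),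
      Finset.sum_range_succ, Finset.sum_range_succ, hXveq, hvk]
    have hjv : ∑ j ∈ Finset.range k, v j / β ^ (j + 1)
        = ∑ j ∈ Finset.range k, u j / β ^ (j + 1) := by
      apply Finset.sum_congr rfl
      intro j hj
      rw [hv]; dsimp only; rw [if_pos (Finset.mem_range.1 hj)]
    rw [hjv]
    ring
  have hvu := huniq v hvd heq
  exact hne (by rw [← hvk, hvu])

/-- for m ∈ (1,2] and 1 < β < 2, the only unique β-expansions over
{0,1,m} are the constant sequences 0^ω and m^ω. -/
theorem stmt_14 (m β : ℝ) (hm1 : 1 < m) (hm2 : m ≤ 2) (hβ1 : 1 < β) (hβ2 : β < 2) :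
    ∀ u : ℕ → ℝ, (∀ k, u k = 0 ∨ u k = 1 ∨ u k = m) →
      (∀ v : ℕ → ℝ, (∀ k, v k = 0 ∨ v k = 1 ∨ v k = m) →
        (∑' k : ℕ, v k / β ^ (k + 1)) = (∑' k : ℕ, u k / β ^ (k + 1)) → v = u) →
      u = (fun _ => 0) ∨ u = (fun _ => m) := by
  intro u hu huniq
  have hm0 : (0:ℝ) < m := by linarith
  have hβ0 : (0:ℝ) < β := by linarith
  have hb : (0:ℝ) < β - 1 := by linarith
  have hub := dig_bounds hm1 hu
  have hM : m < m / (β - 1) := by rw [lt_div_iff₀ hb]; nlinarith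
  have hXb : ∀ k, 0 ≤ Xv β u k ∧ Xv β u k ≤ m / (β - 1) := Xv_bounds hm0 hβ1 hub
  have hXrec : ∀ k, Xv β u k = u k / β + (1/β) * Xv β u (k + 1) := Xv_rec hm0 hβ1 hub
  -- condition when digit is 0
  have C0 : ∀ k, u k = 0 → Xv β u (k + 1) < 1 := by
    intro k hk
    by_contra h
    push_neg at h
    apply swap hm1 hβ1 hβ2 hu huniq k 1 (by tauto) (by rw [hk]; norm_num)
    · rw [hk]; linarith
    · rw [hk]; have := (hXb (k+1)).2; linarith
  -- condition when digit is m
  have Cm : ∀ k, u k = m → m / (β - 1) - (m - 1) < Xv β u (k + 1) := by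
    intro k hk
    by_contra h
    push_neg at h
    apply swap hm1 hβ1 hβ2 hu huniq k 1 (by tauto) (by rw [hk]; intro he; linarith)
    · rw [hk]; have := (hXb (k+1)).1; linarith
    · rw [hk]; linarith
  -- digit 1 never occurs
  have C1 : ∀ k, u k ≠ 1 := by
    intro k hk
    rcases le_or_gt (m - 1) (Xv β u (k + 1)) with h|h
    · apply swap hm1 hβ1 hβ2 hu huniq k m (by tauto) (by rw [hk]; intro he; linarith)
      · rw [hk]; linarith
      · rw [hk]; have := (hXb (k+1)).2; linarith
    · apply swap hm1 hβ1 hβ2 hu huniq k 0 (by tauto) (by rw [hk]; norm_num)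
      · rw [hk]; have := (hXb (k+1)).1; linarith
      · rw [hk]; linarith
  -- consecutive digits are equal
  have hstep : ∀ k, u (k + 1) = u k := by
    intro k
    rcases hu k with h0|h1|hmm
    · rcases hu (k+1) with g0|g1|gm
      · rw [g0, h0]
      · exact absurd g1 (C1 (k+1))
      · exfalso
        have hx1 : Xv β u (k+1) < 1 := C0 k h0
        have hx2 : m / (β - 1) - (m - 1) < Xv β u (k + 2) := Cm (k+1) gm
        have hr := hXrec (k+1)
        rw [gm] at hr
        have hβX : β * Xv β u (k+1) = m + Xv β u (k+2) := by
          field_simp at hr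
          linarith
        have h1 : β * Xv β u (k+1) < β := by nlinarith [(hXb (k+1)).1]
        have h2 : 1 < Xv β u (k+2) := by linarith
        linarith
    · exact absurd h1 (C1 k)
    · rcases hu (k+1) with g0|g1|gm
      · exfalso
        have hx1 : m / (β - 1) - (m - 1) < Xv β u (k + 1) := Cm k hmm
        have hx2 : Xv β u (k+2) < 1 := C0 (k+1) g0
        have hr := hXrec (k+1)
        rw [g0] at hr
        have hβX : β * Xv β u (k+1) = Xv β u (k+2) := by
          field_simp at hr
          linarith
        have h1 : 1 < Xv β u (k+1) := by linarith
        nlinarith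
      · exact absurd g1 (C1 (k+1))
      · rw [gm, hmm]
  have hconst : ∀ k, u k = u 0 := by
    intro k
    induction k with
    | zero => rfl
    | succ n ih => rw [hstep n, ih]
  rcases hu 0 with h|h|h
  · left; funext k; rw [hconst k, h]
  · exact absurd h (C1 0)
  · right; funext k; rw [hconst k, h]
end
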